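/- Define f_0, f_1 : ℝ → ℝ by f_0(x) = |3x − 1| and f_1(x) = |3x − 2|. Then for every n ≥ 1 there exists an injective function α : {0,1}^n → (0, 1) such that for every σ ∈ {0,1}^n, f_σ(α(σ)) = 0, and for every τ ∈ {0,1}^n with τ ≠ σ, f_τ(α(σ)) > 0. In particular, for each of the 2^n bit strings σ, the composition f_σ is the unique function among { f_τ : τ ∈ {0,1}^n } attaining the pointwise minimum min_{τ ∈ {0,1}^n} f_τ(x) at the point x = α(σ). -/
import Mathlib


/-- The tent-like piecewise linear function `f₀ x = |3x - 1|`. -/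
noncomputable def f₀ (x : ℝ) : ℝ := |3 * x - 1|

/-- The tent-like piecewise linear function `f₁ x = |3x - 2|`. -/
noncomputable def f₁ (x : ℝ) : ℝ := |3 * x - 2|

/-- For a bit string `σ = σ₁ ⋯ σₙ` (as a list of booleans, `false ↦ f₀`,
`true ↦ f₁`), the composition `f_σ = f_{σₙ} ∘ ⋯ ∘ f_{σ₁}`: the innermost
function corresponds to the first bit. -/
noncomputable def bitComp (f0 f1 : ℝ → ℝ) (l : List Bool) : ℝ → ℝ :=
  fun x => l.foldl (fun y b => (if b then f1 else f0) y) x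

/-- The witness point for a bit string, defined by backward recursion. -/
noncomputable def gpt (l : List Bool) : ℝ :=
  match l with
  | [] => 0
  | b :: l' => if b then (2 + gpt l') / 3 else (1 - gpt l') / 3

lemma gpt_nonneg_lt_one (l : List Bool) : 0 ≤ gpt l ∧ gpt l < 1 := by
  induction l with
  | nil => simp [gpt]
  | cons b l ih =>
    obtain ⟨h0, h1⟩ := ih
    cases b <;> simp [gpt] <;> constructor <;> linarith

lemma gpt_pos (l : List Bool) (hl : l ≠ []) : 0 < gpt l := by
  cases l with
  | nil => exact absurd rfl hl
  | cons b l =>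
    obtain ⟨h0, h1⟩ := gpt_nonneg_lt_one l
    cases b <;> simp [gpt] <;> linarith

lemma bitComp_cons (l : List Bool) (b : Bool) (x : ℝ) :
    bitComp f₀ f₁ (b :: l) x = bitComp f₀ f₁ l ((if b then f₁ else f₀) x) := by
  simp [bitComp]

lemma step_gpt (b : Bool) (l : List Bool) :
    (if b then f₁ else f₀) (gpt (b :: l)) = gpt l := by
  obtain ⟨h0, h1⟩ := gpt_nonneg_lt_one l
  cases b
  · simp only [gpt, f₀, if_false, Bool.false_eq_true]
    rw [show 3 * ((1 - gpt l) / 3) - 1 = -(gpt l) by ring, abs_neg,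
      abs_of_nonneg h0]
  · simp only [gpt, f₁, if_true]
    rw [show 3 * ((2 + gpt l) / 3) - 2 = gpt l by ring, abs_of_nonneg h0]

lemma bitComp_gpt_zero (l : List Bool) : bitComp f₀ f₁ l (gpt l) = 0 := by
  induction l with
  | nil => simp [bitComp, gpt]
  | cons b l ih => rw [bitComp_cons, step_gpt]; exact ih

lemma bitComp_ge_one (l : List Bool) (x : ℝ) (hx : 1 ≤ x) :
    1 ≤ bitComp f₀ f₁ l x := by
  induction l generalizing x with
  | nil => simpa [bitComp]
  | cons b l ih =>
    rw [bitComp_cons]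
    apply ih
    cases b <;> simp [f₀, f₁] <;> rw [abs_of_nonneg (by linarith)] <;> linarith

lemma bitComp_mismatch (l m : List Bool) (hlen : l.length = m.length)
    (hne : l ≠ m) : 1 ≤ bitComp f₀ f₁ m (gpt l) := by
  induction l generalizing m with
  | nil =>
    cases m with
    | nil => exact absurd rfl hne
    | cons b m => simp at hlen
  | cons a l ih =>
    cases m with
    | nil => simp at hlen
    | cons b m =>
      simp only [List.length_cons, Nat.succ.injEq] at hlen
      by_cases hab : a = b
      · subst hab
        rw [bitComp_cons, step_gpt]
        exact ih m hlen (by simpa using hne)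
      · rw [bitComp_cons]
        obtain ⟨h0, h1⟩ := gpt_nonneg_lt_one l
        apply bitComp_ge_one
        cases a <;> cases b <;> simp_all [gpt, f₀, f₁]
        · rw [show 3 * ((1 - gpt l) / 3) - 2 = -(1 + gpt l) by ring, abs_neg,
            abs_of_nonneg (by linarith)]
          linarith
        · rw [show 3 * ((2 + gpt l) / 3) - 1 = 1 + gpt l by ring,
            abs_of_nonneg (by linarith)]
          linarith

/-- for every `n ≥ 1` there is an injective
`α : {0,1}ⁿ → (0, 1)` such that `f_σ (α σ) = 0` for every `σ`, while
`f_τ (α σ) > 0` for every `τ ≠ σ`; so each of the `2ⁿ` compositions `f_σ`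
uniquely attains the pointwise minimum at `α σ`. -/
theorem exists_alpha_for_tents (n : ℕ) (hn : 1 ≤ n) :
    ∃ α : (Fin n → Bool) → ℝ,
      Function.Injective α ∧
      (∀ σ : Fin n → Bool, α σ ∈ Set.Ioo (0 : ℝ) 1) ∧
      (∀ σ : Fin n → Bool, bitComp f₀ f₁ (List.ofFn σ) (α σ) = 0) ∧
      (∀ σ τ : Fin n → Bool, τ ≠ σ →
        0 < bitComp f₀ f₁ (List.ofFn τ) (α σ)) := by
  refine ⟨fun σ => gpt (List.ofFn σ), ?_, ?_, ?_, ?_⟩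
  · intro σ τ h
    by_contra hne
    have hne' : List.ofFn σ ≠ List.ofFn τ := by
      simpa [List.ofFn_inj] using hne
    have h' : gpt (List.ofFn σ) = gpt (List.ofFn τ) := h
    have h1 := bitComp_mismatch (List.ofFn σ) (List.ofFn τ) (by simp) hne'
    rw [h', bitComp_gpt_zero] at h1
    linarith
  · intro σ
    have hne : List.ofFn σ ≠ [] := by
      simp [← List.length_eq_zero_iff]
      omega
    exact ⟨gpt_pos _ hne, (gpt_nonneg_lt_one _).2⟩
  · intro σ
    exact bitComp_gpt_zero _
  · intro σ τ hne
    have hne' : List.ofFn σ ≠ List.ofFn τ := by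
      simpa [List.ofFn_inj] using (Ne.symm hne)
    have := bitComp_mismatch (List.ofFn σ) (List.ofFn τ) (by simp) hne'
    linarith
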